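/- arXiv:2602.05084 — 4 statements merged into one kernel-verified Lean document; each statement's English description precedes it below -/
import Mathlib

section
/- Let d ≥ 1 and let l : ℝᵈ → ℝ be differentiable with ‖∇l(x)‖₂ ≤ C_l for all x, where C_l > 0. Let λ > 0, let g : ℝ → ℝ be continuously differentiable and strictly increasing with g(0) = 0, let 𝒞 > 0 satisfy g(𝒞) = 1/λ, and let C_g > 0 satisfy g′(u) ≤ C_g for all u ∈ [0, 𝒞]. Fix M_c > 0 and set L_c = min{λ M_c / C_l, M_c / (C_l C_g 𝒞)}. Let p : ℝ → ℝ be continuous with 0 ≤ p(t) ≤ L_c for all t, and define the expected best-response cost c(x) = ∫_{l(x)}^{l(x)+𝒞} g(t − l(x)) p(t) dt. Then |c(x₁) − c(x₂)| ≤ M_c‖x₁ − x₂‖₂ for all x₁, x₂ ∈ ℝᵈ. -/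
/-!
After the substitution `t = l x + u` the cost is `F (l x)` with
`F s = ∫ u in 0..𝒞, g u * p (u + s)`, and since `l` is `C_l`-Lipschitz it suffices that `F` is
`M_c / C_l`-Lipschitz. Integrating by parts against a primitive of `p` gives, for `s₁ ≤ s₂`,
`F s₂ - F s₁ = g 𝒞 * m 𝒞 - ∫ u in 0..𝒞, g' u * m u`, where `m u` is the mass of `p` on
`[u + s₁, u + s₂]` and so lies in `[0, L_c (s₂ - s₁)]`. Both terms are nonnegative because `g` is
increasing, so `|F s₂ - F s₁| ≤ max (g 𝒞) (C_g 𝒞) L_c (s₂ - s₁)`, and the two halves of the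
minimum defining `L_c` are exactly what makes `g 𝒞 L_c = L_c / λ` and `C_g 𝒞 L_c` at most
`M_c / C_l`.
-/

open Set intervalIntegral

theorem abs_sub_le_of_norm_gradient_le {E : Type*} [NormedAddCommGroup E] [InnerProductSpace ℝ E]
    [CompleteSpace E] {f : E → ℝ} {C : ℝ} (hf : Differentiable ℝ f)
    (hC : ∀ x, ‖gradient f x‖ ≤ C) (x y : E) : |f x - f y| ≤ C * ‖x - y‖ := by
  have hfderiv : ∀ z ∈ univ, ‖fderiv ℝ f z‖ ≤ C := fun z _ => by
    rw [← toDual_gradient, LinearIsometryEquiv.norm_map]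
    exact hC z
  simpa using convex_univ.norm_image_sub_le_of_norm_fderiv_le (fun z _ => hf z) hfderiv
    (mem_univ y) (mem_univ x)

theorem integral_mem_Icc_of_mem_Icc {p : ℝ → ℝ} {L a b : ℝ} (hp : Continuous p)
    (hpL : ∀ t, p t ∈ Icc 0 L) (hab : a ≤ b) :
    ∫ t in a..b, p t ∈ Icc 0 (L * (b - a)) := by
  refine ⟨integral_nonneg hab fun t _ => (hpL t).1, ?_⟩
  calc ∫ t in a..b, p t ≤ ∫ _ in a..b, L :=
        integral_mono_on hab (hp.intervalIntegrable a b) intervalIntegrable_const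
          fun t _ => (hpL t).2
    _ = L * (b - a) := by simp [mul_comm]

theorem hasDerivAt_integral_add_const_add_const {p : ℝ → ℝ} (hp : Continuous p) (s₁ s₂ u : ℝ) :
    HasDerivAt (fun u => ∫ t in u + s₁..u + s₂, p t) (p (u + s₂) - p (u + s₁)) u := by
  have hprim : ∀ s, HasDerivAt (fun u => ∫ t in 0..u + s, p t) (p (u + s)) u := fun s =>
    (hp.integral_hasStrictDerivAt 0 (u + s)).hasDerivAt.comp_add_const u s
  refine ((hprim s₂).sub (hprim s₁)).congr_of_eventuallyEq (.of_forall fun v => ?_)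
  exact (integral_interval_sub_left (hp.intervalIntegrable _ _) (hp.intervalIntegrable _ _)).symm

noncomputable def bestResponseCost (g p : ℝ → ℝ) (𝒞 s : ℝ) : ℝ :=
  ∫ u in 0..𝒞, g u * p (u + s)

theorem integral_comp_sub_mul_eq_bestResponseCost (g p : ℝ → ℝ) (𝒞 s : ℝ) :
    ∫ t in s..s + 𝒞, g (t - s) * p t = bestResponseCost g p 𝒞 s := by
  have := integral_comp_sub_right (fun u => g u * p (u + s)) s (a := s) (b := s + 𝒞)
  simp only [sub_add_cancel, sub_self, add_sub_cancel_left] at this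
  exact this

section bestResponseCost

variable {g p : ℝ → ℝ} {𝒞 C L : ℝ}

theorem bestResponseCost_sub_eq (hg : ContDiff ℝ 1 g) (hg0 : g 0 = 0) (hp : Continuous p)
    (s₁ s₂ : ℝ) :
    bestResponseCost g p 𝒞 s₂ - bestResponseCost g p 𝒞 s₁ =
      g 𝒞 * (∫ t in 𝒞 + s₁..𝒞 + s₂, p t) -
        ∫ u in 0..𝒞, deriv g u * ∫ t in u + s₁..u + s₂, p t := by
  have hshift : ∀ s, Continuous fun u => g u * p (u + s) := fun s =>
    hg.continuous.mul (hp.comp (continuous_add_const s))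
  rw [bestResponseCost, bestResponseCost, ← integral_sub ((hshift s₂).intervalIntegrable _ _)
    ((hshift s₁).intervalIntegrable _ _)]
  simp_rw [← mul_sub]
  simpa [hg0] using integral_mul_deriv_eq_deriv_mul (a := 0) (b := 𝒞)
    (fun u _ => ((hg.differentiable one_ne_zero) u).hasDerivAt)
    (fun u _ => hasDerivAt_integral_add_const_add_const hp s₁ s₂ u)
    ((hg.continuous_deriv le_rfl).intervalIntegrable _ _)
    (((hp.comp (continuous_add_const s₂)).sub
      (hp.comp (continuous_add_const s₁))).intervalIntegrable _ _)

theorem abs_bestResponseCost_sub_le (hg : ContDiff ℝ 1 g) (hg_mono : Monotone g) (hg0 : g 0 = 0)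
    (h𝒞 : 0 ≤ 𝒞) (hg' : ∀ u ∈ Icc 0 𝒞, deriv g u ≤ C) (hp : Continuous p)
    (hpL : ∀ t, p t ∈ Icc 0 L) (s₁ s₂ : ℝ) :
    |bestResponseCost g p 𝒞 s₁ - bestResponseCost g p 𝒞 s₂| ≤
      max (g 𝒞) (C * 𝒞) * L * |s₁ - s₂| := by
  wlog h12 : s₁ ≤ s₂ generalizing s₁ s₂
  · rw [abs_sub_comm, abs_sub_comm s₁]
    exact this s₂ s₁ (le_of_not_ge h12)
  set δ := L * (s₂ - s₁)
  set m := fun u => ∫ t in u + s₁..u + s₂, p t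
  have hmass : ∀ u, m u ∈ Icc 0 δ := fun u => by
    simpa using integral_mem_Icc_of_mem_Icc hp hpL (by linarith : u + s₁ ≤ u + s₂)
  have hδ : 0 ≤ δ := (hmass 0).1.trans (hmass 0).2
  have hg𝒞 : 0 ≤ g 𝒞 := hg0 ▸ hg_mono h𝒞
  have hboundary : g 𝒞 * m 𝒞 ∈ Icc 0 (g 𝒞 * δ) :=
    ⟨mul_nonneg hg𝒞 (hmass 𝒞).1, mul_le_mul_of_nonneg_left (hmass 𝒞).2 hg𝒞⟩
  have hbulk : ∫ u in 0..𝒞, deriv g u * m u ∈ Icc 0 (C * 𝒞 * δ) := by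
    have hdg : ∀ u, 0 ≤ deriv g u := fun u => hg_mono.deriv_nonneg
    have hm : Continuous m := continuous_iff_continuousAt.2 fun u =>
      (hasDerivAt_integral_add_const_add_const hp s₁ s₂ u).continuousAt
    refine ⟨integral_nonneg h𝒞 fun u _ => mul_nonneg (hdg u) (hmass u).1, ?_⟩
    calc ∫ u in 0..𝒞, deriv g u * m u ≤ ∫ _ in 0..𝒞, C * δ :=
          integral_mono_on h𝒞 (((hg.continuous_deriv le_rfl).mul hm).intervalIntegrable _ _)
            intervalIntegrable_const fun u hu =>
              (mul_le_mul_of_nonneg_left (hmass u).2 (hdg u)).trans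
                (mul_le_mul_of_nonneg_right (hg' u hu) hδ)
      _ = C * 𝒞 * δ := by rw [integral_const, smul_eq_mul, sub_zero]; ring
  rw [abs_sub_comm, bestResponseCost_sub_eq hg hg0 hp, abs_sub_comm s₁,
    abs_of_nonneg (sub_nonneg.2 h12), mul_assoc, abs_sub_le_iff]
  constructor
  · linarith [mul_le_mul_of_nonneg_right (le_max_left (g 𝒞) (C * 𝒞)) hδ, hbulk.1, hboundary.2]
  · linarith [mul_le_mul_of_nonneg_right (le_max_right (g 𝒞) (C * 𝒞)) hδ, hbulk.2, hboundary.1]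

end bestResponseCost

theorem randomized_classifier_IF_wrt_BRC_general
    (d : ℕ)
    (l : EuclideanSpace ℝ (Fin d) → ℝ) (hl_diff : Differentiable ℝ l)
    (C_l : ℝ) (hCl : 0 < C_l) (hl_grad : ∀ x, ‖gradient l x‖ ≤ C_l)
    (lam : ℝ) (hlam : 0 < lam)
    (g : ℝ → ℝ) (hg : ContDiff ℝ 1 g) (hg_mono : StrictMono g) (hg0 : g 0 = 0)
    (𝒞 : ℝ) (h𝒞 : 0 < 𝒞) (hg𝒞 : g 𝒞 = 1 / lam)
    (C_g : ℝ) (hCg : 0 < C_g) (hg' : ∀ u ∈ Set.Icc (0 : ℝ) 𝒞, deriv g u ≤ C_g)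
    (M_c : ℝ) (hMc : 0 < M_c)
    (L_c : ℝ) (hLc : L_c = min (lam * M_c / C_l) (M_c / (C_l * C_g * 𝒞)))
    (p : ℝ → ℝ) (hp_cont : Continuous p) (hp : ∀ t, 0 ≤ p t ∧ p t ≤ L_c)
    (c : EuclideanSpace ℝ (Fin d) → ℝ)
    (hc : ∀ x, c x = ∫ t in (l x)..(l x + 𝒞), g (t - l x) * p t) :
    ∀ x₁ x₂, |c x₁ - c x₂| ≤ M_c * ‖x₁ - x₂‖ := by
  intro x₁ x₂
  have hcost : ∀ x, c x = bestResponseCost g p 𝒞 (l x) := fun x => by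
    rw [hc, integral_comp_sub_mul_eq_bestResponseCost]
  have hLc_nonneg : 0 ≤ L_c := (hp 0).1.trans (hp 0).2
  have hK : max (g 𝒞) (C_g * 𝒞) * L_c ≤ M_c / C_l := by
    rw [max_mul_of_nonneg _ _ hLc_nonneg, hg𝒞]
    refine max_le ?_ ?_
    · calc 1 / lam * L_c ≤ 1 / lam * (lam * M_c / C_l) := by gcongr; exact hLc ▸ min_le_left _ _
        _ = M_c / C_l := by field_simp
    · calc C_g * 𝒞 * L_c ≤ C_g * 𝒞 * (M_c / (C_l * C_g * 𝒞)) := by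
            gcongr; exact hLc ▸ min_le_right _ _
        _ = M_c / C_l := by field_simp
  calc |c x₁ - c x₂| ≤ max (g 𝒞) (C_g * 𝒞) * L_c * |l x₁ - l x₂| := by
        rw [hcost, hcost]
        exact abs_bestResponseCost_sub_le hg hg_mono.monotone hg0 h𝒞.le hg' hp_cont hp _ _
    _ ≤ M_c / C_l * (C_l * ‖x₁ - x₂‖) :=
        mul_le_mul hK (abs_sub_le_of_norm_gradient_le hl_diff hl_grad x₁ x₂) (abs_nonneg _)
          (by positivity)
    _ = M_c * ‖x₁ - x₂‖ := by field_simp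

/-- A randomized threshold classifier whose threshold density is bounded by
`L_c = min (λ M_c / C_l) (M_c / (C_l C_g 𝒞))` satisfies individual fairness
with respect to the expected best-response cost with constant `M_c`. -/
theorem randomized_classifier_IF_wrt_BRC
    (d : ℕ) (hd : 1 ≤ d)
    (l : EuclideanSpace ℝ (Fin d) → ℝ) (hl_diff : Differentiable ℝ l)
    (C_l : ℝ) (hCl : 0 < C_l) (hl_grad : ∀ x, ‖gradient l x‖ ≤ C_l)
    (lam : ℝ) (hlam : 0 < lam)
    (g : ℝ → ℝ) (hg : ContDiff ℝ 1 g) (hg_mono : StrictMono g) (hg0 : g 0 = 0)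
    (𝒞 : ℝ) (h𝒞 : 0 < 𝒞) (hg𝒞 : g 𝒞 = 1 / lam)
    (C_g : ℝ) (hCg : 0 < C_g) (hg' : ∀ u ∈ Set.Icc (0 : ℝ) 𝒞, deriv g u ≤ C_g)
    (M_c : ℝ) (hMc : 0 < M_c)
    (L_c : ℝ) (hLc : L_c = min (lam * M_c / C_l) (M_c / (C_l * C_g * 𝒞)))
    (p : ℝ → ℝ) (hp_cont : Continuous p) (hp : ∀ t, 0 ≤ p t ∧ p t ≤ L_c)
    (c : EuclideanSpace ℝ (Fin d) → ℝ)
    (hc : ∀ x, c x = ∫ t in (l x)..(l x + 𝒞), g (t - l x) * p t) :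
    ∀ x₁ x₂, |c x₁ - c x₂| ≤ M_c * ‖x₁ - x₂‖ :=
  randomized_classifier_IF_wrt_BRC_general d l hl_diff C_l hCl hl_grad lam hlam g hg hg_mono hg0 𝒞
    h𝒞 hg𝒞 C_g hCg hg' M_c hMc L_c hLc p hp_cont hp c hc
end

section
/- Let g : ℝ → ℝ be continuously differentiable and strictly increasing with g(0) = 0, let 𝒞 > 0, let C_g > 0 satisfy g′(u) ≤ C_g for all u ∈ [0, 𝒞], and let p : ℝ → ℝ be continuous with 0 ≤ p(t) ≤ L for all t, where L > 0. Define F : ℝ → ℝ by F(s) = ∫_s^{s+𝒞} g(t − s) p(t) dt. Then F is Lipschitz continuous with constant L · max{g(𝒞), C_g 𝒞}, i.e. |F(s₁) − F(s₂)| ≤ L · max{g(𝒞), C_g 𝒞} · |s₁ − s₂| for all s₁, s₂ ∈ ℝ. -/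
/-!
Integrating by parts against an antiderivative `P` of `p` (the boundary term at `t = s` vanishes
since `g 0 = 0`) gives `F s = g 𝒞 * P (s + 𝒞) - ∫₀^𝒞 g' u * P (s + u) du`. So for `s₂ ≤ s₁`,
`F s₁ - F s₂ = X - Y` with `X = g 𝒞 * ΔP 𝒞` and `Y = ∫₀^𝒞 g' u * ΔP u du`, where
`ΔP u = P (s₁ + u) - P (s₂ + u) ∈ [0, L (s₁ - s₂)]` because `0 ≤ p ≤ L`. As `0 ≤ g' ≤ C_g`, both
`X` and `Y` lie in `[0, L * max (g 𝒞) (C_g * 𝒞) * (s₁ - s₂)]`, hence so does `|X - Y|`.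
-/

open MeasureTheory intervalIntegral Set

theorem integral_comp_sub_mul_eq_sub_integral {g p P : ℝ → ℝ} (hg : ContDiff ℝ 1 g)
    (hg0 : g 0 = 0) (hP : ∀ x, HasDerivAt P (p x) x) (s c : ℝ)
    (hp : IntervalIntegrable p volume s (s + c)) :
    ∫ t in s..s + c, g (t - s) * p t = g c * P (s + c) - ∫ u in 0..c, deriv g u * P (s + u) := by
  have hg_diff : Differentiable ℝ g := hg.differentiable one_ne_zero
  have hgs : ∀ t ∈ uIcc s (s + c), HasDerivAt (fun t => g (t - s)) (deriv g (t - s)) t :=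
    fun t _ => (hg_diff (t - s)).hasDerivAt.comp_sub_const t s
  have hgs' : IntervalIntegrable (fun t => deriv g (t - s)) volume s (s + c) :=
    ((hg.continuous_deriv le_rfl).comp (continuous_sub_right s)).intervalIntegrable _ _
  have hshift : ∫ t in s..s + c, deriv g (t - s) * P t = ∫ u in 0..c, deriv g u * P (s + u) := by
    simpa using integral_comp_sub_right (fun u => deriv g u * P (s + u)) s (a := s) (b := s + c)
  rw [integral_mul_deriv_eq_deriv_mul hgs (fun t _ => hP t) hgs' hp, hshift]
  simp [hg0]

theorem increment_mem_Icc_of_hasDerivAt {P p : ℝ → ℝ} {L : ℝ} (hP : ∀ x, HasDerivAt P (p x) x)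
    (hp : ∀ t, p t ∈ Icc 0 L) {x y : ℝ} (hxy : x ≤ y) :
    P y - P x ∈ Icc 0 (L * (y - x)) := by
  have hP_diff : Differentiable ℝ P := fun x => (hP x).differentiableAt
  have hP' : deriv P = p := funext fun x => (hP x).deriv
  constructor
  · simpa using
      mul_sub_le_image_sub_of_le_deriv hP_diff (C := 0) (fun t => by simp [hP', (hp t).1]) hxy
  · exact image_sub_le_mul_sub_of_deriv_le hP_diff (fun t => by simp [hP', (hp t).2]) hxy

theorem integral_comp_sub_mul_sub_eq {g p P : ℝ → ℝ} (hg : ContDiff ℝ 1 g) (hg0 : g 0 = 0)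
    (hP : ∀ x, HasDerivAt P (p x) x) (hp : Continuous p) (a b c : ℝ) :
    (∫ t in a..a + c, g (t - a) * p t) - ∫ t in b..b + c, g (t - b) * p t =
      g c * (P (a + c) - P (b + c)) - ∫ u in 0..c, deriv g u * (P (a + u) - P (b + u)) := by
  have hP_cont : Continuous P := continuous_iff_continuousAt.2 fun x => (hP x).continuousAt
  have hint : ∀ s, IntervalIntegrable (fun u => deriv g u * P (s + u)) volume 0 c :=
    fun s => ((hg.continuous_deriv le_rfl).mul
      (hP_cont.comp (continuous_const_add s))).intervalIntegrable _ _
  simp only [integral_comp_sub_mul_eq_sub_integral hg hg0 hP _ c (hp.intervalIntegrable _ _),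
    mul_sub, integral_sub (hint a) (hint b)]
  ring

theorem integral_mul_le_of_bounds {f h : ℝ → ℝ} {a b C M : ℝ} (hab : a ≤ b) (hC : 0 ≤ C)
    (hfh : IntervalIntegrable (fun u => f u * h u) volume a b)
    (hf : ∀ u ∈ Icc a b, f u ≤ C) (hh : ∀ u ∈ Icc a b, h u ∈ Icc 0 M) :
    ∫ u in a..b, f u * h u ≤ C * (b - a) * M := by
  calc ∫ u in a..b, f u * h u ≤ ∫ _ in a..b, C * M :=
        integral_mono_on hab hfh intervalIntegrable_const fun u hu =>
          mul_le_mul (hf u hu) (hh u hu).2 (hh u hu).1 hC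
    _ = C * (b - a) * M := by rw [intervalIntegral.integral_const, smul_eq_mul]; ring

/-- The expected best-response cost `F s = ∫_s^{s+𝒞} g (t - s) p t dt` is
Lipschitz with constant `L * max (g 𝒞) (C_g * 𝒞)` whenever the threshold
density `p` is bounded by `L`. -/
theorem expected_BRC_lipschitz
    (g : ℝ → ℝ) (hg : ContDiff ℝ 1 g) (hg_mono : StrictMono g) (hg0 : g 0 = 0)
    (𝒞 : ℝ) (h𝒞 : 0 < 𝒞)
    (C_g : ℝ) (hCg : 0 < C_g) (hg' : ∀ u ∈ Set.Icc (0 : ℝ) 𝒞, deriv g u ≤ C_g)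
    (L : ℝ) (hL : 0 < L)
    (p : ℝ → ℝ) (hp_cont : Continuous p) (hp : ∀ t, 0 ≤ p t ∧ p t ≤ L)
    (F : ℝ → ℝ) (hF : ∀ s, F s = ∫ t in s..(s + 𝒞), g (t - s) * p t) :
    ∀ s₁ s₂ : ℝ, |F s₁ - F s₂| ≤ L * max (g 𝒞) (C_g * 𝒞) * |s₁ - s₂| := by
  intro s₁ s₂
  wlog h : s₂ ≤ s₁ generalizing s₁ s₂
  · rw [abs_sub_comm, abs_sub_comm s₁]
    exact this s₂ s₁ (le_of_not_ge h)
  set P : ℝ → ℝ := fun x => ∫ t in (0 : ℝ)..x, p t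
  have hP : ∀ x, HasDerivAt P (p x) x := fun x => hp_cont.integral_hasStrictDerivAt 0 x |>.hasDerivAt
  have hΔP : ∀ u, P (s₁ + u) - P (s₂ + u) ∈ Icc 0 (L * (s₁ - s₂)) := by
    intro u
    simpa only [add_sub_add_right_eq_sub] using
      increment_mem_Icc_of_hasDerivAt hP hp (add_le_add_left h u)
  have hLδ : 0 ≤ L * (s₁ - s₂) := mul_nonneg hL.le (sub_nonneg.2 h)
  have hP_cont : Continuous P := continuous_iff_continuousAt.2 fun x => (hP x).continuousAt
  have hg'_cont : Continuous (deriv g) := hg.continuous_deriv le_rfl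
  rw [hF, hF, integral_comp_sub_mul_sub_eq hg hg0 hP hp_cont, abs_of_nonneg (sub_nonneg.2 h)]
  refine (abs_sub_le_of_nonneg_of_le (n := max (g 𝒞) (C_g * 𝒞) * (L * (s₁ - s₂)))
    ?_ ?_ ?_ ?_).trans_eq (by ring)
  · exact mul_nonneg (hg0 ▸ (hg_mono h𝒞).le) (hΔP 𝒞).1
  · exact mul_le_mul (le_max_left _ _) (hΔP 𝒞).2 (hΔP 𝒞).1 (le_max_of_le_right (by positivity))
  · exact integral_nonneg h𝒞.le fun u _ => mul_nonneg hg_mono.monotone.deriv_nonneg (hΔP u).1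
  · calc _ ≤ C_g * (𝒞 - 0) * (L * (s₁ - s₂)) :=
          integral_mul_le_of_bounds h𝒞.le hCg.le (Continuous.intervalIntegrable (by fun_prop) _ _)
            hg' fun u _ => hΔP u
      _ ≤ _ := by rw [sub_zero]; exact mul_le_mul_of_nonneg_right (le_max_right _ _) hLδ
end

section
/- Let d ≥ 1, let l : ℝᵈ → ℝ be differentiable with ‖∇l(x)‖₂ ≤ C_l for all x (C_l > 0), let g : ℝ → ℝ be continuously differentiable and strictly increasing with g(0) = 0, let λ > 0, let 𝒞 > 0 satisfy g(𝒞) = 1/λ, let C_g > 0 satisfy g′(u) ≤ C_g for all u ∈ [0, 𝒞], and let p : ℝ → ℝ be continuous with 0 ≤ p(t) ≤ L for all t, where L > 0. Define c(x) = ∫_{l(x)}^{l(x)+𝒞} g(t − l(x)) p(t) dt. Then c is differentiable, ∇c(x) = ∇l(x) · [ (1/λ) p(l(x) + 𝒞) − ∫_{l(x)}^{l(x)+𝒞} g′(t − l(x)) p(t) dt ], and ‖∇c(x)‖₂ ≤ C_l · max{L/λ, C_g 𝒞 L} for all x ∈ ℝᵈ. -/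
/-!
Substituting `u = t - s` and integrating by parts against a primitive `P` of `p` turns
`∫_s^{s+𝒞} g(t - s) p(t) dt` into `g(𝒞) P(𝒞 + s) - g(0) P(s) - ∫_0^𝒞 g'(u) P(u + s) du`, in which
`s` enters only through the `C¹` function `P`, so the last integral can be differentiated under
the integral sign although `p` itself is merely continuous. Undoing the substitution gives the
Leibniz formula, and the chain rule at `s = l(x)` gives the gradient. Its scalar factor is the
difference of two nonnegative numbers bounded by `L/λ` and `C_g 𝒞 L`.
-/

open Set MeasureTheory

lemma integral_comp_sub_mul_eq_integral_mul_comp_add (f q : ℝ → ℝ) (s c : ℝ) :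
    ∫ t in s..s + c, f (t - s) * q t = ∫ u in 0..c, f u * q (u + s) := by
  simpa [add_comm] using
    (intervalIntegral.integral_comp_add_right (fun t => f (t - s) * q t) s (a := 0) (b := c)).symm

lemma hasDerivAt_integral_mul_comp_add {f p P : ℝ → ℝ} (hf : Continuous f) (hp : Continuous p)
    (hP : ∀ t, HasDerivAt P (p t) t) (a b s : ℝ) :
    HasDerivAt (fun s => ∫ u in a..b, f u * P (u + s)) (∫ u in a..b, f u * p (u + s)) s := by
  have hPc : Continuous P := continuous_iff_continuousAt.2 fun t => (hP t).continuousAt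
  obtain ⟨M, hM⟩ := (isCompact_uIcc.add (isCompact_closedBall s 1)).exists_bound_of_continuousOn
    hp.continuousOn
  refine (intervalIntegral.hasDerivAt_integral_of_dominated_loc_of_deriv_le
    (F := fun x u => f u * P (u + x)) (F' := fun x u => f u * p (u + x))
    (bound := fun u => ‖f u‖ * M) (Metric.ball_mem_nhds s one_pos) ?_ ?_ ?_ ?_ ?_ ?_).2
  · exact .of_forall fun x => (hf.mul (hPc.comp (continuous_add_const x))).aestronglyMeasurable
  · exact (hf.mul (hPc.comp (continuous_add_const s))).intervalIntegrable _ _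
  · exact (hf.mul (hp.comp (continuous_add_const s))).aestronglyMeasurable
  · refine .of_forall fun u hu x hx => ?_
    rw [norm_mul]
    exact mul_le_mul_of_nonneg_left (hM _ (add_mem_add (uIoc_subset_uIcc hu)
      (Metric.ball_subset_closedBall hx))) (norm_nonneg _)
  · exact (hf.norm.mul continuous_const).intervalIntegrable _ _
  · exact .of_forall fun u _ x _ => ((hP (u + x)).comp_const_add u x).const_mul (f u)

lemma integral_comp_sub_mul_eq_sub_integral_deriv_mul {g p P : ℝ → ℝ}
    (hg : ContDiff ℝ 1 g) (hp : Continuous p) (hP : ∀ t, HasDerivAt P (p t) t) (s c : ℝ) :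
    ∫ t in s..s + c, g (t - s) * p t =
      g c * P (c + s) - g 0 * P (0 + s) - ∫ u in 0..c, deriv g u * P (u + s) :=
  (integral_comp_sub_mul_eq_integral_mul_comp_add g p s c).trans <|
    intervalIntegral.integral_mul_deriv_eq_deriv_mul
      (fun u _ => (hg.differentiable one_ne_zero u).hasDerivAt)
      (fun u _ => (hP (u + s)).comp_add_const u s)
      ((hg.continuous_deriv le_rfl).intervalIntegrable _ _)
      ((hp.comp (continuous_add_const s)).intervalIntegrable _ _)

theorem hasDerivAt_integral_comp_sub_mul {g p : ℝ → ℝ} (hg : ContDiff ℝ 1 g) (hp : Continuous p)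
    (c s : ℝ) :
    HasDerivAt (fun s => ∫ t in s..s + c, g (t - s) * p t)
      (g c * p (c + s) - g 0 * p s - ∫ t in s..s + c, deriv g (t - s) * p t) s := by
  have hP : ∀ t, HasDerivAt (fun t => ∫ u in 0..t, p u) (p t) t := fun t =>
    (hp.integral_hasStrictDerivAt 0 t).hasDerivAt
  simp_rw [integral_comp_sub_mul_eq_sub_integral_deriv_mul hg hp hP,
    integral_comp_sub_mul_eq_integral_mul_comp_add, zero_add]
  exact ((((hP (c + s)).comp_const_add c s).const_mul (g c)).sub ((hP s).const_mul (g 0))).sub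
    (hasDerivAt_integral_mul_comp_add (hg.continuous_deriv le_rfl) hp hP 0 c s)

lemma integral_deriv_comp_sub_mul_mem_Icc {g p : ℝ → ℝ} (hg_mono : Monotone g)
    (hg'c : Continuous (deriv g)) (hp : Continuous p) {c C L : ℝ} (hc : 0 ≤ c) (hC : 0 ≤ C)
    (hg' : ∀ u ∈ Icc 0 c, deriv g u ≤ C) (hpL : ∀ t, 0 ≤ p t ∧ p t ≤ L) (s : ℝ) :
    ∫ t in s..s + c, deriv g (t - s) * p t ∈ Icc 0 (C * c * L) := by
  rw [integral_comp_sub_mul_eq_integral_mul_comp_add]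
  constructor
  · exact intervalIntegral.integral_nonneg hc fun u _ =>
      mul_nonneg hg_mono.deriv_nonneg (hpL (u + s)).1
  · calc ∫ u in 0..c, deriv g u * p (u + s)
        ≤ ∫ _ in 0..c, C * L :=
          intervalIntegral.integral_mono_on hc
            ((hg'c.mul (hp.comp (continuous_add_const s))).intervalIntegrable _ _)
            intervalIntegrable_const
            fun u hu => mul_le_mul (hg' u hu) (hpL (u + s)).2 (hpL (u + s)).1 hC
      _ = C * c * L := by rw [intervalIntegral.integral_const, smul_eq_mul]; ring

lemma abs_sub_le_max_of_mem_Icc {a b A B : ℝ} (ha : a ∈ Icc 0 A) (hb : b ∈ Icc 0 B) :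
    |a - b| ≤ max A B :=
  abs_sub_le_iff.2
    ⟨by linarith [ha.2, hb.1, le_max_left A B], by linarith [ha.1, hb.2, le_max_right A B]⟩

lemma HasDerivAt.hasGradientAt_comp {E : Type*} [NormedAddCommGroup E] [InnerProductSpace ℝ E]
    [CompleteSpace E] {F : ℝ → ℝ} {F' : ℝ} {l : E → ℝ} {l' x : E}
    (hF : HasDerivAt F F' (l x)) (hl : HasGradientAt l l' x) :
    HasGradientAt (F ∘ l) (F' • l') x := by
  rw [hasGradientAt_iff_hasFDerivAt] at hl ⊢
  simpa [map_smul] using hF.comp_hasFDerivAt x hl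

theorem expected_BRC_gradient_general
    (d : ℕ)
    (l : EuclideanSpace ℝ (Fin d) → ℝ) (hl_diff : Differentiable ℝ l)
    (C_l : ℝ) (hCl : 0 < C_l) (hl_grad : ∀ x, ‖gradient l x‖ ≤ C_l)
    (g : ℝ → ℝ) (hg : ContDiff ℝ 1 g) (hg_mono : StrictMono g) (hg0 : g 0 = 0)
    (lam : ℝ) (hlam : 0 < lam)
    (𝒞 : ℝ) (h𝒞 : 0 < 𝒞) (hg𝒞 : g 𝒞 = 1 / lam)
    (C_g : ℝ) (hCg : 0 < C_g) (hg' : ∀ u ∈ Set.Icc (0 : ℝ) 𝒞, deriv g u ≤ C_g)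
    (L : ℝ)
    (p : ℝ → ℝ) (hp_cont : Continuous p) (hp : ∀ t, 0 ≤ p t ∧ p t ≤ L)
    (c : EuclideanSpace ℝ (Fin d) → ℝ)
    (hc : ∀ x, c x = ∫ t in (l x)..(l x + 𝒞), g (t - l x) * p t) :
    Differentiable ℝ c ∧
      (∀ x, gradient c x =
        ((1 / lam) * p (l x + 𝒞) - ∫ t in (l x)..(l x + 𝒞), deriv g (t - l x) * p t)
          • gradient l x) ∧
      (∀ x, ‖gradient c x‖ ≤ C_l * max (L / lam) (C_g * 𝒞 * L)) := by
  have hgrad : ∀ x, HasGradientAt c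
      (((1 / lam) * p (l x + 𝒞) - ∫ t in (l x)..(l x + 𝒞), deriv g (t - l x) * p t)
        • gradient l x) x := fun x => by
    have hF := hasDerivAt_integral_comp_sub_mul hg hp_cont 𝒞 (l x)
    rw [hg𝒞, hg0, zero_mul, sub_zero, add_comm] at hF
    rw [funext hc]
    exact hF.hasGradientAt_comp (hl_diff x).hasGradientAt
  refine ⟨fun x => (hgrad x).differentiableAt, fun x => (hgrad x).gradient, fun x => ?_⟩
  have hboundary : (1 / lam) * p (l x + 𝒞) ∈ Icc 0 (L / lam) := by
    rw [one_div_mul_eq_div]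
    exact ⟨div_nonneg (hp _).1 hlam.le, div_le_div_of_nonneg_right (hp _).2 hlam.le⟩
  have hintegral := integral_deriv_comp_sub_mul_mem_Icc hg_mono.monotone
    (hg.continuous_deriv le_rfl) hp_cont h𝒞.le hCg.le hg' hp (l x)
  rw [(hgrad x).gradient, norm_smul, Real.norm_eq_abs, mul_comm]
  exact mul_le_mul (hl_grad x) (abs_sub_le_max_of_mem_Icc hboundary hintegral) (abs_nonneg _)
    hCl.le

/-- Gradient formula and gradient-norm bound for the expected best-response
cost `c x = ∫_{l x}^{l x + 𝒞} g (t - l x) p t dt` of a randomized threshold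
classifier with density `p` bounded by `L`. -/
theorem expected_BRC_gradient
    (d : ℕ) (hd : 1 ≤ d)
    (l : EuclideanSpace ℝ (Fin d) → ℝ) (hl_diff : Differentiable ℝ l)
    (C_l : ℝ) (hCl : 0 < C_l) (hl_grad : ∀ x, ‖gradient l x‖ ≤ C_l)
    (g : ℝ → ℝ) (hg : ContDiff ℝ 1 g) (hg_mono : StrictMono g) (hg0 : g 0 = 0)
    (lam : ℝ) (hlam : 0 < lam)
    (𝒞 : ℝ) (h𝒞 : 0 < 𝒞) (hg𝒞 : g 𝒞 = 1 / lam)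
    (C_g : ℝ) (hCg : 0 < C_g) (hg' : ∀ u ∈ Set.Icc (0 : ℝ) 𝒞, deriv g u ≤ C_g)
    (L : ℝ) (hL : 0 < L)
    (p : ℝ → ℝ) (hp_cont : Continuous p) (hp : ∀ t, 0 ≤ p t ∧ p t ≤ L)
    (c : EuclideanSpace ℝ (Fin d) → ℝ)
    (hc : ∀ x, c x = ∫ t in (l x)..(l x + 𝒞), g (t - l x) * p t) :
    Differentiable ℝ c ∧
      (∀ x, gradient c x =
        ((1 / lam) * p (l x + 𝒞) - ∫ t in (l x)..(l x + 𝒞), deriv g (t - l x) * p t)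
          • gradient l x) ∧
      (∀ x, ‖gradient c x‖ ≤ C_l * max (L / lam) (C_g * 𝒞 * L)) :=
  expected_BRC_gradient_general d l hl_diff C_l hCl hl_grad g hg hg_mono hg0 lam hlam 𝒞 h𝒞 hg𝒞 C_g
    hCg hg' L p hp_cont hp c hc
end

section
/- Let λ > 0, let g : ℝ → ℝ be strictly increasing and continuous with g(0) = 0 attaining the value 1/λ, and set 𝒞 = g⁻¹(1/λ). Fix a threshold t ∈ ℝ and a score s ∈ ℝ with t − 𝒞 ≤ s < t. Then for every s′ ≥ s, the individual utility 1[s′ ≥ t] − 1[s ≥ t] − λ g(s′ − s) is at most 1 − λ g(t − s); this maximal value is attained at s′ = t, and it is nonnegative. Hence the best response of an individual with score s is to move its score to t. -/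
/-- Best-response characterization, gaming-band case: an individual with score
`s` satisfying `t - 𝒞 ≤ s < t` maximizes its utility
`1[s' ≥ t] - 1[s ≥ t] - λ g (s' - s)` by moving its score to `t`, where the
maximal utility `1 - λ g (t - s)` is nonnegative. -/
theorem best_response_gaming_band
    (lam : ℝ) (hlam : 0 < lam)
    (g : ℝ → ℝ) (hg_mono : StrictMono g) (hg_cont : Continuous g) (hg0 : g 0 = 0)
    (𝒞 : ℝ) (hg𝒞 : g 𝒞 = 1 / lam)
    (t s : ℝ) (hs₁ : t - 𝒞 ≤ s) (hs₂ : s < t) :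
    (∀ s', s ≤ s' →
        (if t ≤ s' then (1 : ℝ) else 0) - (if t ≤ s then (1 : ℝ) else 0)
            - lam * g (s' - s)
          ≤ 1 - lam * g (t - s)) ∧
      ((if t ≤ t then (1 : ℝ) else 0) - (if t ≤ s then (1 : ℝ) else 0)
            - lam * g (t - s)
          = 1 - lam * g (t - s)) ∧
      0 ≤ 1 - lam * g (t - s) := by
  have hts : ¬ t ≤ s := not_le.mpr hs₂
  have hmax : 0 ≤ 1 - lam * g (t - s) := by
    have h1 : g (t - s) ≤ g 𝒞 := hg_mono.monotone (by linarith)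
    rw [hg𝒞] at h1
    have := mul_le_mul_of_nonneg_left h1 hlam.le
    rw [mul_one_div, div_self hlam.ne'] at this
    linarith
  refine ⟨fun s' hs' => ?_, by simp [hts], hmax⟩
  by_cases h : t ≤ s'
  · have : g (t - s) ≤ g (s' - s) := hg_mono.monotone (by linarith)
    simp only [h, hts, if_true, if_false]
    nlinarith
  · have : (0:ℝ) ≤ g (s' - s) := by
      have := hg_mono.monotone (sub_nonneg.mpr hs')
      rw [hg0] at this; exact this
    simp only [h, hts, if_false]
    nlinarith
end
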